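/- Let d_1 = 2n_1+1 and d_2 = 2n_2+1 be odd numbers, d = d_1+d_2-1, and let λ_1, λ_2 be special orthogonal partitions of d_1 and d_2 respectively. Let W = W(λ_1,λ_2) = λ_1+λ_2+ξ be the Waldspurger sequence for the type B data. Then: (i) W is an orthogonal partition of d; (ii) if ν_1 is a C-collapse of (λ_1^t)^−, ν_2 is a C-collapse of (λ_2^t)^−, and ν is a C-collapse of (W^t)^−, then ν_1 ∪ ν_2 ≤ ν in dominance order; (iii) if moreover η is a B-collapse of ((ν_1 ∪ ν_2)^t)^+, then W ≤ η in dominance order. -/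

import Mathlib

/-- `f` is a partition of `d`: weakly decreasing, finitely many nonzero terms, total sum `d`.
    Indexing is 0-based: `f j` is the `(j+1)`-st part. -/
def IsPartitionOf (f : ℕ → ℕ) (d : ℕ) : Prop :=
  Antitone f ∧ ∃ N, (∀ j, N ≤ j → f j = 0) ∧ ∑ j ∈ Finset.range N, f j = d

/-- Transpose of a partition (0-based): `ptrans f k` = #{j : f j ≥ k+1}, i.e. `(f^t)_{k+1}`. -/
noncomputable def ptrans (f : ℕ → ℕ) : ℕ → ℕ := fun k => Nat.card {j : ℕ // k + 1 ≤ f j}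

/-- Multiplicity of the part `k` in `f` (meaningful for `k > 0`). -/
noncomputable def pmult (f : ℕ → ℕ) (k : ℕ) : ℕ := Nat.card {j : ℕ // f j = k}

/-- Orthogonal: every even positive part occurs with even multiplicity. -/
def IsOrthogonal (f : ℕ → ℕ) : Prop := ∀ k, 0 < k → Even k → Even (pmult f k)

/-- Symplectic: every odd positive part occurs with even multiplicity. -/
def IsSymplectic (f : ℕ → ℕ) : Prop := ∀ k, 0 < k → Odd k → Even (pmult f k)

/-- Dominance order for ℕ-valued sequences. -/
def NDomLE (f g : ℕ → ℕ) : Prop :=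
  ∀ N, ∑ j ∈ Finset.range N, f j ≤ ∑ j ∈ Finset.range N, g j

/-- Dominance order for ℤ-valued sequences. -/
def DomLE (f g : ℕ → ℤ) : Prop :=
  ∀ N, ∑ j ∈ Finset.range N, f j ≤ ∑ j ∈ Finset.range N, g j

/-- `ν` is the `P`-collapse of `μ` (both of total size `m`): `ν` is a partition of `m`
    satisfying `P`, `ν ≤ μ`, and every partition `σ` of `m` satisfying `P` with `σ ≤ μ`
    satisfies `σ ≤ ν`. -/
def IsCollapse (P : (ℕ → ℕ) → Prop) (m : ℕ) (μ ν : ℕ → ℕ) : Prop :=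
  IsPartitionOf ν m ∧ P ν ∧ NDomLE ν μ ∧
    ∀ σ, IsPartitionOf σ m → P σ → NDomLE σ μ → NDomLE σ ν

/-- B-collapse (largest orthogonal partition below `μ`, `m` odd). -/
def IsBCollapse : ℕ → (ℕ → ℕ) → (ℕ → ℕ) → Prop := IsCollapse IsOrthogonal
/-- C-collapse (largest symplectic partition below `μ`, `m` even). -/
def IsCCollapse : ℕ → (ℕ → ℕ) → (ℕ → ℕ) → Prop := IsCollapse IsSymplectic
/-- D-collapse (largest orthogonal partition below `μ`, `m` even). -/
def IsDCollapse : ℕ → (ℕ → ℕ) → (ℕ → ℕ) → Prop := IsCollapse IsOrthogonal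

/-- `μ^−` : decrease the smallest nonzero part by 1. -/
def minusOne (f : ℕ → ℕ) : ℕ → ℕ :=
  fun j => if 0 < f j ∧ f (j+1) = 0 then f j - 1 else f j

/-- `μ^+` : increase the largest part by 1. -/
def plusOne (f : ℕ → ℕ) : ℕ → ℕ := fun j => if j = 0 then f 0 + 1 else f j

/-- `u = f ∪ g` : `u` is weakly decreasing, finitely supported, and every positive
    part occurs in `u` with multiplicity the sum of its multiplicities in `f` and `g`. -/
def IsUnionOf (u f g : ℕ → ℕ) : Prop :=
  Antitone u ∧ (∃ N, ∀ j, N ≤ j → u j = 0) ∧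
    ∀ k, 0 < k → pmult u k = pmult f k + pmult g k

/-- The sequence ξ attached to `(f, g, ε₁, ε₂, d)`.  Index `j` here corresponds to the
    1-based index `j+1` of the paper. -/
def xiSeq (f g : ℕ → ℕ) (e1 e2 d : ℕ) : ℕ → ℤ := fun j =>
  if (j + 1) % 2 = (d + 1) % 2 ∧ f j % 2 = e1 ∧ g j % 2 = e2 ∧
      (j = 0 ∨ f j + g j < f (j - 1) + g (j - 1)) then 1
  else if (j + 1) % 2 = d % 2 ∧ f j % 2 = e1 ∧ g j % 2 = e2 ∧
      f (j + 1) + g (j + 1) < f j + g j then -1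
  else 0

/-- The Waldspurger sequence `W(f,g) = f + g + ξ` (ℤ-valued a priori). -/
def wald (f g : ℕ → ℕ) (e1 e2 d : ℕ) : ℕ → ℤ :=
  fun j => (f j : ℤ) + (g j : ℤ) + xiSeq f g e1 e2 d j

/-!
Write `F`, `G` for the prefix sums of `λ₁`, `λ₂`. Since `λᵢᵗ` is orthogonal, `λᵢ (2j+1)` and
`λᵢ (2j+2)` have the same parity, and as `|λᵢ|` is odd so is `λᵢ 0`; hence every prefix sum of
odd length is odd. In this situation the nonzero terms of `ξ` alternate `-1, +1, -1, …`, so the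
prefix sums of `W` are `F + G` or `F + G - 1`. That makes `W` a partition of `d`, and a local
look at pairs of consecutive positions shows that its even parts occur an even number of times.

For (ii) and (iii), the columns of each `νᵢ` bound `F` (resp. `G`) up to one box, their prefix
sums are even at even cuts, and they are concave. Where `∑ ξ = 0` the parts at the cut are odd
and parity plus concavity make the bounds exact; where `∑ ξ = -1` this `-1` absorbs one of the
two possible extra boxes, and both occur only when both `λᵢ` have dropped below their largest
part, in which case `W` has too. The resulting inequality
`W_K ≤ ∑_{k<K} (ν₁ ∪ ν₂)ᵗ_k + [W K < W 0]` says both that `ν₁ ∪ ν₂ ≤ (Wᵗ)⁻` (after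
transposing) and that `W ≤ ((ν₁ ∪ ν₂)ᵗ)⁺`, so maximality of the collapses `ν` and `η` ends the
proof.
-/

open Finset

lemma even_sum_range_two_mul {a : ℕ → ℕ} (h : ∀ i, Even (a (2 * i) + a (2 * i + 1))) (r : ℕ) :
    Even (∑ k ∈ range (2 * r), a k) := by
  induction r with
  | zero => simp
  | succ r ih =>
    rw [show 2 * (r + 1) = 2 * r + 1 + 1 by ring, sum_range_succ, sum_range_succ, add_assoc]
    exact ih.add (h r)

lemma even_ncard_of_forall_mem_iff {S : Set ℕ} (hS : S.Finite)
    (h : ∀ i, 2 * i ∈ S ↔ 2 * i + 1 ∈ S) : Even S.ncard := by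
  classical
  obtain ⟨B, hB⟩ := hS.bddAbove
  have hSB : S = ↑((range (2 * (B + 1))).filter (· ∈ S)) := by
    ext j
    simp only [coe_filter, mem_range, Set.mem_ofPred_eq, iff_and_self]
    intro hj
    have := hB hj
    omega
  rw [hSB, Set.ncard_coe_finset, card_filter]
  refine even_sum_range_two_mul (fun i => ?_) _
  simp only [← h i]
  split_ifs <;> decide

lemma even_ncard_of_forall_mem_iff_succ {S : Set ℕ} (hS : S.Finite) (h0 : 0 ∉ S)
    (h : ∀ i, 2 * i + 1 ∈ S ↔ 2 * i + 2 ∈ S) : Even S.ncard := by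
  have hinj : Function.Injective (· + 1 : ℕ → ℕ) := add_left_injective 1
  rw [← Set.ncard_preimage_of_injective_subset_range hinj fun j hj =>
    ⟨j - 1, Nat.sub_add_cancel (Nat.pos_of_ne_zero fun h => h0 (h ▸ hj))⟩]
  exact even_ncard_of_forall_mem_iff (hS.preimage hinj.injOn) h

section Transpose

variable {f : ℕ → ℕ} {N m : ℕ}

lemma IsLowerSet.eq_Iio_ncard {S : Set ℕ} (hS : IsLowerSet S) (hfin : S.Finite) :
    S = Set.Iio S.ncard := by
  obtain h | ⟨a, rfl⟩ := hS.eq_univ_or_Iio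
  · exact absurd (h ▸ hfin) Set.infinite_univ
  · rw [Set.ncard_Iio_nat]

lemma ptrans_eq_ncard (f : ℕ → ℕ) (k : ℕ) : ptrans f k = {j | k < f j}.ncard :=
  Nat.card_coe_set_eq {j | k < f j}

lemma pmult_eq_ncard (f : ℕ → ℕ) (k : ℕ) : pmult f k = {j | f j = k}.ncard :=
  Nat.card_coe_set_eq {j | f j = k}

lemma setOf_lt_eq_Iio_ptrans (hf : Antitone f) (hN : ∀ j, N ≤ j → f j = 0) (k : ℕ) :
    {j | k < f j} = Set.Iio (ptrans f k) := by
  have hfin : {j | k < f j}.Finite :=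
    (Set.finite_Iio N).subset fun j (hj : k < f j) => by
      by_contra h
      have := hN j (not_lt.1 h)
      omega
  rw [ptrans_eq_ncard]
  exact IsLowerSet.eq_Iio_ncard (fun a b hba ha => lt_of_lt_of_le ha (hf hba)) hfin

lemma lt_ptrans_iff (hf : Antitone f) (hN : ∀ j, N ≤ j → f j = 0) {k j : ℕ} :
    j < ptrans f k ↔ k < f j :=
  (Set.ext_iff.1 (setOf_lt_eq_Iio_ptrans hf hN k) j).symm

lemma ptrans_eq_zero (hf : Antitone f) (hN : ∀ j, N ≤ j → f j = 0) {k : ℕ} (hk : f 0 ≤ k) :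
    ptrans f k = 0 := by
  by_contra h
  have := (lt_ptrans_iff hf hN).1 (Nat.pos_of_ne_zero h)
  omega

lemma ptrans_le (hf : Antitone f) (hN : ∀ j, N ≤ j → f j = 0) (k : ℕ) : ptrans f k ≤ N := by
  by_contra h
  have := (lt_ptrans_iff hf hN).1 (not_le.1 h)
  have := hN N le_rfl
  omega

lemma ptrans_antitone (hf : Antitone f) (hN : ∀ j, N ≤ j → f j = 0) : Antitone (ptrans f) := by
  intro a b hab
  by_contra h
  have := (lt_ptrans_iff hf hN).1 (not_le.1 h)
  have := (lt_ptrans_iff hf hN (k := a) (j := ptrans f a)).not.1 (lt_irrefl _)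
  omega

lemma ptrans_ptrans (hf : Antitone f) (hN : ∀ j, N ≤ j → f j = 0) (j : ℕ) :
    ptrans (ptrans f) j = f j := by
  have : {k | j < ptrans f k} = Set.Iio (f j) := by
    ext k
    exact (lt_ptrans_iff hf hN).trans (by simp)
  rw [ptrans_eq_ncard, this, Set.ncard_Iio_nat]

lemma pmult_succ (hf : Antitone f) (hN : ∀ j, N ≤ j → f j = 0) (k : ℕ) :
    pmult f (k + 1) = ptrans f k - ptrans f (k + 1) := by
  have : {j | f j = k + 1} = Set.Ico (ptrans f (k + 1)) (ptrans f k) := by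
    ext j
    have := (lt_ptrans_iff hf hN (k := k) (j := j))
    have := (lt_ptrans_iff hf hN (k := k + 1) (j := j))
    simp only [Set.mem_ofPred_eq, Set.mem_Ico]
    omega
  rw [pmult_eq_ncard, this, Set.ncard_Ico_nat]

lemma sum_range_eq_of_le (hN : ∀ j, N ≤ j → f j = 0) {M : ℕ} (hM : N ≤ M) :
    ∑ j ∈ range M, f j = ∑ j ∈ range N, f j := by
  rw [← sum_range_add_sum_Ico _ hM, sum_eq_zero fun j hj => hN j (mem_Ico.1 hj).1, add_zero]

lemma sum_range_ptrans (hf : Antitone f) (hN : ∀ j, N ≤ j → f j = 0) (K : ℕ) :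
    ∑ k ∈ range K, ptrans f k = ∑ j ∈ range N, min (f j) K := by
  have hcol : ∀ k, ptrans f k = ∑ j ∈ range N, if k < f j then 1 else 0 := by
    intro k
    rw [← card_filter, ← card_range (ptrans f k)]
    congr 1
    ext j
    have := ptrans_le hf hN k
    have := lt_ptrans_iff hf hN (k := k) (j := j)
    simp only [mem_filter, mem_range]
    omega
  have hrow : ∀ j, ∑ k ∈ range K, (if k < f j then 1 else 0) = min (f j) K := by
    intro j
    rw [← card_filter, show (range K).filter (· < f j) = range (min (f j) K) by ext; simp; omega,
      card_range]
  simp_rw [hcol, sum_comm (s := range K), hrow]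

lemma sum_range_ptrans_of_le (hf : Antitone f) (hN : ∀ j, N ≤ j → f j = 0) {K : ℕ}
    (hK : f 0 ≤ K) : ∑ k ∈ range K, ptrans f k = ∑ j ∈ range N, f j :=
  (sum_range_ptrans hf hN K).trans <|
    sum_congr rfl fun j _ => min_eq_left ((hf (Nat.zero_le j)).trans hK)

lemma IsPartitionOf.transpose (h : IsPartitionOf f m) : IsPartitionOf (ptrans f) m := by
  obtain ⟨hf, N, hN, hsum⟩ := h
  exact ⟨ptrans_antitone hf hN, f 0, fun k hk => ptrans_eq_zero hf hN hk,
    (sum_range_ptrans_of_le hf hN le_rfl).trans hsum⟩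

lemma IsPartitionOf.sum_range_eq (h : IsPartitionOf f m) :
    ∃ N, (∀ j, N ≤ j → f j = 0) ∧ ∀ M, N ≤ M → ∑ j ∈ range M, f j = m := by
  obtain ⟨-, N, hN, hsum⟩ := h
  exact ⟨N, hN, fun M hM => (sum_range_eq_of_le hN hM).trans hsum⟩

lemma IsPartitionOf.zero_pos (h : IsPartitionOf f (m + 1)) : 0 < f 0 := by
  obtain ⟨hf, N, -, hsum⟩ := h
  by_contra h0
  rw [sum_eq_zero fun j _ => by have := hf (Nat.zero_le j); omega] at hsum
  omega

end Transpose

section Dominance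

variable {f g : ℕ → ℕ} {N m : ℕ}

lemma sum_range_min_le (f : ℕ → ℕ) (K : ℕ) {P M : ℕ} (hP : P ≤ M) :
    ∑ j ∈ range M, min (f j) K ≤ K * P + ∑ j ∈ Ico P M, f j := by
  rw [← sum_range_add_sum_Ico _ hP]
  gcongr
  · calc ∑ j ∈ range P, min (f j) K ≤ ∑ _j ∈ range P, K := sum_le_sum fun j _ => min_le_right _ _
      _ = K * P := by simp [mul_comm]
  · exact min_le_left _ _

lemma sum_range_min_eq (hf : Antitone f) (hN : ∀ j, N ≤ j → f j = 0) (K : ℕ) {M : ℕ}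
    (hM : ptrans f K ≤ M) :
    ∑ j ∈ range M, min (f j) K = K * ptrans f K + ∑ j ∈ Ico (ptrans f K) M, f j := by
  rw [← sum_range_add_sum_Ico _ hM]
  congr 1
  · rw [sum_congr rfl fun j hj => min_eq_right ((lt_ptrans_iff hf hN).1 (mem_range.1 hj)).le]
    simp [mul_comm]
  · refine sum_congr rfl fun j hj => min_eq_left (not_lt.1 fun h => ?_)
    have := (lt_ptrans_iff hf hN).2 h
    have := (mem_Ico.1 hj).1
    omega

/-- Both sides are compared at the cut `P = ptrans f K`, where the row formula for the columns of
`f` is exact and the one for `g` is an upper bound. -/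
lemma NDomLE.transpose (hfp : IsPartitionOf f m) (hgp : IsPartitionOf g m) (h : NDomLE f g) :
    NDomLE (ptrans g) (ptrans f) := by
  intro K
  obtain ⟨Nf, hNf, hsf⟩ := hfp.sum_range_eq
  obtain ⟨Ng, hNg, hsg⟩ := hgp.sum_range_eq
  set M := max Nf Ng
  have hNf' : ∀ j, M ≤ j → f j = 0 := fun j hj => hNf j (le_of_max_le_left hj)
  have hNg' : ∀ j, M ≤ j → g j = 0 := fun j hj => hNg j (le_of_max_le_right hj)
  set P := ptrans f K
  have hP : P ≤ M := ptrans_le hfp.1 hNf' K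
  have hf := sum_range_add_sum_Ico f hP
  have hg := sum_range_add_sum_Ico g hP
  have := hsf M (le_max_left _ _)
  have := hsg M (le_max_right _ _)
  have := h P
  calc ∑ k ∈ range K, ptrans g k = ∑ j ∈ range M, min (g j) K := sum_range_ptrans hgp.1 hNg' K
    _ ≤ K * P + ∑ j ∈ Ico P M, g j := sum_range_min_le g K hP
    _ ≤ K * P + ∑ j ∈ Ico P M, f j := by omega
    _ = ∑ k ∈ range K, ptrans f k := by
      rw [← sum_range_min_eq hfp.1 hNf' K hP, sum_range_ptrans hfp.1 hNf' K]

lemma NDomLE.of_transpose (hfp : IsPartitionOf f m) (hgp : IsPartitionOf g m)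
    (h : NDomLE (ptrans g) (ptrans f)) : NDomLE f g := by
  have := h.transpose hgp.transpose hfp.transpose
  obtain ⟨hf, Nf, hNf, -⟩ := hfp
  obtain ⟨hg, Ng, hNg, -⟩ := hgp
  simpa only [NDomLE, ptrans_ptrans hf hNf, ptrans_ptrans hg hNg] using this

end Dominance

section MinusOnePlusOne

variable {f μ : ℕ → ℕ} {j0 m : ℕ}

lemma minusOne_le (μ : ℕ → ℕ) (j : ℕ) : minusOne μ j ≤ μ j := by
  unfold minusOne
  split_ifs <;> omega

lemma minusOne_antitone (hμ : Antitone μ) : Antitone (minusOne μ) := by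
  refine antitone_nat_of_succ_le fun n => ?_
  have := hμ (Nat.le_add_right n 1)
  have := minusOne_le μ (n + 1)
  show minusOne μ (n + 1) ≤ if 0 < μ n ∧ μ (n + 1) = 0 then μ n - 1 else μ n
  split_ifs <;> omega

lemma minusOne_add_ite (hμ : Antitone μ) (h0 : 0 < μ j0) (h1 : μ (j0 + 1) = 0) (j : ℕ) :
    minusOne μ j + (if j0 = j then 1 else 0) = μ j := by
  rcases lt_trichotomy j j0 with h | rfl | h
  · have := hμ (show j + 1 ≤ j0 by omega)
    simp only [minusOne, if_neg h.ne']
    split_ifs <;> omega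
  · simp only [minusOne, h0, h1, if_true, and_self]
    omega
  · have := hμ (show j0 + 1 ≤ j by omega)
    simp only [minusOne, if_neg h.ne]
    split_ifs <;> omega

lemma isPartitionOf_minusOne (h : IsPartitionOf μ (m + 1)) (h0 : 0 < μ j0)
    (h1 : μ (j0 + 1) = 0) : IsPartitionOf (minusOne μ) m := by
  obtain ⟨hμ, N, hN, hsum⟩ := h
  refine ⟨minusOne_antitone hμ, N, fun j hj => by
    have := minusOne_le μ j; have := hN j hj; omega, ?_⟩
  have hj0 : j0 < N := by
    by_contra h
    have := hN j0 (by omega)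
    omega
  rw [← sum_congr rfl fun j _ => minusOne_add_ite hμ h0 h1 j, sum_add_distrib,
    sum_ite_eq, if_pos (mem_range.2 hj0)] at hsum
  omega

lemma ptrans_pred_pos (hf : Antitone f) (hN : ∀ j, N ≤ j → f j = 0) (h0 : 0 < f 0) :
    0 < ptrans f (f 0 - 1) :=
  (lt_ptrans_iff hf hN).2 (by omega)

lemma ptrans_pred_succ (hf : Antitone f) (hN : ∀ j, N ≤ j → f j = 0) :
    ptrans f (f 0 - 1 + 1) = 0 :=
  ptrans_eq_zero hf hN (by omega)

lemma IsPartitionOf.minusOne_ptrans (h : IsPartitionOf f (m + 1)) :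
    IsPartitionOf (minusOne (ptrans f)) m := by
  obtain ⟨N, hN, -⟩ := h.2
  have hf := h.1
  exact isPartitionOf_minusOne h.transpose (ptrans_pred_pos hf hN h.zero_pos)
    (ptrans_pred_succ hf hN)

/-- `((fᵗ)⁻)ᵗ` is `f` with one box removed from its last row of maximal length, and that row is
among the first `K` exactly when `f K < f 0`. -/
lemma sum_range_ptrans_minusOne_ptrans (h : IsPartitionOf f (m + 1)) (K : ℕ) :
    ∑ k ∈ range K, ptrans (minusOne (ptrans f)) k + (if f K < f 0 then 1 else 0)
      = ∑ k ∈ range K, f k := by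
  obtain ⟨N, hN, -⟩ := h.2
  have hf := h.1
  have hμ := ptrans_antitone hf hN
  have hμN : ∀ k, f 0 ≤ k → ptrans f k = 0 := fun k hk => ptrans_eq_zero hf hN hk
  have hνN : ∀ k, f 0 ≤ k → minusOne (ptrans f) k = 0 := fun k hk => by
    have := minusOne_le (ptrans f) k; have := hμN k hk; omega
  have hf0 := h.zero_pos
  have h0 := ptrans_pred_pos hf hN hf0
  have h1 := ptrans_pred_succ hf hN
  have hterm : ∀ j, min (minusOne (ptrans f) j) K + (if f 0 - 1 = j then
      (if ptrans f (f 0 - 1) ≤ K then 1 else 0) else 0) = min (ptrans f j) K := by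
    intro j
    have := minusOne_add_ite hμ h0 h1 j
    rcases eq_or_ne (f 0 - 1) j with rfl | hj
    · simp only [if_true] at this ⊢
      split_ifs <;> omega
    · simp only [if_neg hj] at this ⊢
      omega
  have hlast : ptrans f (f 0 - 1) ≤ K ↔ f K < f 0 := by
    have := (lt_ptrans_iff hf hN (k := f 0 - 1) (j := K))
    have := hf (Nat.zero_le K)
    omega
  rw [sum_range_ptrans (minusOne_antitone hμ) hνN, ← sum_congr rfl fun k _ => ptrans_ptrans hf hN k,
    sum_range_ptrans hμ hμN, ← sum_congr rfl fun j _ => hterm j, sum_add_distrib, sum_ite_eq,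
    if_pos (mem_range.2 (by omega))]
  simp only [hlast]

lemma sum_range_succ_plusOne (u : ℕ → ℕ) (K : ℕ) :
    ∑ j ∈ range (K + 1), plusOne u j = ∑ j ∈ range (K + 1), u j + 1 := by
  simp only [sum_range_succ', plusOne, add_eq_zero, one_ne_zero, and_false, if_false, if_true]
  ring

end MinusOnePlusOne

section Union

variable {f g u : ℕ → ℕ} {N m₁ m₂ : ℕ}

lemma ptrans_eq_sum_pmult_add (hf : Antitone f) (hN : ∀ j, N ≤ j → f j = 0) (k t : ℕ) :
    ptrans f k = ∑ i ∈ range t, pmult f (k + 1 + i) + ptrans f (k + t) := by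
  induction t with
  | zero => simp
  | succ t ih =>
    have := pmult_succ hf hN (k + t)
    have := ptrans_antitone hf hN (Nat.le_add_right (k + t) 1)
    rw [sum_range_succ, ← add_assoc k t 1, show k + 1 + t = k + t + 1 by ring]
    omega

lemma IsUnionOf.ptrans_eq (hu : IsUnionOf u f g) (hfp : IsPartitionOf f m₁)
    (hgp : IsPartitionOf g m₂) (k : ℕ) : ptrans u k = ptrans f k + ptrans g k := by
  obtain ⟨hua, ⟨Nu, hNu⟩, hmult⟩ := hu
  obtain ⟨hfa, Nf, hNf, -⟩ := hfp
  obtain ⟨hga, Ng, hNg, -⟩ := hgp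
  set t := max (u 0) (max (f 0) (g 0))
  rw [ptrans_eq_sum_pmult_add hua hNu k t, ptrans_eq_sum_pmult_add hfa hNf k t,
    ptrans_eq_sum_pmult_add hga hNg k t, ptrans_eq_zero hua hNu (by omega),
    ptrans_eq_zero hfa hNf (by omega), ptrans_eq_zero hga hNg (by omega),
    sum_congr rfl fun i _ => hmult (k + 1 + i) (by omega), sum_add_distrib]
  ring

lemma IsUnionOf.isPartitionOf (hu : IsUnionOf u f g) (hfp : IsPartitionOf f m₁)
    (hgp : IsPartitionOf g m₂) : IsPartitionOf u (m₁ + m₂) := by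
  have hpt := hu.ptrans_eq hfp hgp
  obtain ⟨hua, ⟨Nu, hNu⟩, -⟩ := hu
  refine ⟨hua, Nu, hNu, ?_⟩
  obtain ⟨hfa, Nf, hNf, hsf⟩ := hfp
  obtain ⟨hga, Ng, hNg, hsg⟩ := hgp
  set K := max (u 0) (max (f 0) (g 0))
  rw [← sum_range_ptrans_of_le hua hNu (K := K) (by omega), sum_congr rfl fun k _ => hpt k,
    sum_add_distrib, sum_range_ptrans_of_le hfa hNf (by omega),
    sum_range_ptrans_of_le hga hNg (by omega), hsf, hsg]

lemma IsUnionOf.isSymplectic (hu : IsUnionOf u f g) (hf : IsSymplectic f) (hg : IsSymplectic g) :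
    IsSymplectic u := fun k hk hodd => by
  rw [hu.2.2 k hk]
  exact (hf k hk hodd).add (hg k hk hodd)

end Union

section Parity

variable {f : ℕ → ℕ} {N n : ℕ}

/-- The parity pattern of a special orthogonal partition of an odd number: the largest part is
odd and `f (2i+1) ≡ f (2i+2)`, i.e. `λ_{2i} ≡ λ_{2i+1} (mod 2)` in the paper's 1-based indexing. -/
structure IsParityPaired (f : ℕ → ℕ) : Prop where
  zero_odd : f 0 % 2 = 1
  succ_mod_two : ∀ i, f (2 * i + 1) % 2 = f (2 * i + 2) % 2

lemma sum_range_two_mul_add_one_mod_two (h : ∀ i, f (2 * i + 1) % 2 = f (2 * i + 2) % 2)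
    (i : ℕ) : (∑ j ∈ range (2 * i + 1), f j) % 2 = f 0 % 2 := by
  induction i with
  | zero => simp
  | succ i ih =>
    rw [show 2 * (i + 1) + 1 = 2 * i + 1 + 1 + 1 by ring, sum_range_succ, sum_range_succ]
    have := h i
    omega

lemma IsParityPaired.sum_range_mod_two (hp : IsParityPaired f) (i : ℕ) :
    (∑ j ∈ range (2 * i + 1), f j) % 2 = 1 :=
  (sum_range_two_mul_add_one_mod_two hp.succ_mod_two i).trans hp.zero_odd

lemma IsParityPaired.succ_mod_two_of_odd (hp : IsParityPaired f) {j : ℕ} (hj : j % 2 = 1) :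
    f (j + 1) % 2 = f j % 2 := by
  obtain ⟨i, rfl⟩ : ∃ i, j = 2 * i + 1 := ⟨j / 2, by omega⟩
  exact (hp.succ_mod_two i).symm

lemma isParityPaired_of_special (h : IsPartitionOf f (2 * n + 1))
    (hs : IsOrthogonal (ptrans f)) : IsParityPaired f := by
  obtain ⟨N, hN, hsum⟩ := h.sum_range_eq
  have hf := h.1
  have hpair : ∀ i, f (2 * i + 1) % 2 = f (2 * i + 2) % 2 := by
    intro i
    -- the even part `2i+2` of `fᵗ` has multiplicity `f (2i+1) - f (2i+2)`
    have hmult :=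
      pmult_succ (ptrans_antitone hf hN) (fun k hk => ptrans_eq_zero hf hN hk) (2 * i + 1)
    rw [ptrans_ptrans hf hN, ptrans_ptrans hf hN, show 2 * i + 1 + 1 = 2 * i + 2 by ring] at hmult
    have heven := Nat.even_iff.1 (hs (2 * i + 2) (by omega) ⟨i + 1, by ring⟩)
    have := hf (show 2 * i + 1 ≤ 2 * i + 2 by omega)
    omega
  refine ⟨?_, hpair⟩
  have := sum_range_two_mul_add_one_mod_two hpair N
  rw [hsum _ (by omega)] at this
  omega

/-- A prefix ending where the parts drop has the parity of its length, because the even parts of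
an orthogonal partition come in runs of even length. -/
lemma sum_range_ptrans_mod_two (hf : Antitone f) (hN : ∀ j, N ≤ j → f j = 0)
    (ho : IsOrthogonal f) (k : ℕ) :
    (∑ j ∈ range (ptrans f k), f j) % 2 = ptrans f k % 2 := by
  suffices ∀ t k, f 0 ≤ k + t → (∑ j ∈ range (ptrans f k), f j) % 2 = ptrans f k % 2 from
    this (f 0) k (by omega)
  intro t
  induction t with
  | zero => intro k hk; rw [ptrans_eq_zero hf hN (by omega)]; simp
  | succ t ih =>
    intro k hk
    have hle := ptrans_antitone hf hN (Nat.le_add_right k 1)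
    have hmult := pmult_succ hf hN k
    have hrun : ∑ j ∈ Ico (ptrans f (k + 1)) (ptrans f k), f j
        = (ptrans f k - ptrans f (k + 1)) * (k + 1) := by
      rw [sum_congr rfl fun j hj => ?_, sum_const, Nat.card_Ico, smul_eq_mul]
      have := (lt_ptrans_iff hf hN (k := k) (j := j))
      have := (lt_ptrans_iff hf hN (k := k + 1) (j := j))
      have := mem_Ico.1 hj
      omega
    have hmod := Nat.mul_mod (ptrans f k - ptrans f (k + 1)) (k + 1) 2
    rw [← sum_range_add_sum_Ico _ hle, hrun]
    have := ih (k + 1) (by omega)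
    rcases Nat.mod_two_eq_zero_or_one (k + 1) with h | h
    · have := ho (k + 1) (by omega) (Nat.even_iff.2 h)
      rw [Nat.even_iff] at this
      rw [h] at hmod
      omega
    · rw [h] at hmod
      omega

/-- As `f` drops after `i`, `i + 1` is a cut, so `∑_{j ≤ i} f j` is even, while `∑_{j < i} f j`
is odd. -/
lemma mod_two_eq_one_of_lt_succ (hf : Antitone f) (hN : ∀ j, N ≤ j → f j = 0)
    (ho : IsOrthogonal f) (hp : IsParityPaired f) {i : ℕ} (hi : i % 2 = 1)
    (hlt : f (i + 1) < f i) : f i % 2 = 1 := by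
  have hcut : ptrans f (f (i + 1)) = i + 1 := by
    have := (lt_ptrans_iff hf hN (k := f (i + 1)) (j := i))
    have := (lt_ptrans_iff hf hN (k := f (i + 1)) (j := i + 1))
    omega
  have := sum_range_ptrans_mod_two hf hN ho (f (i + 1))
  rw [hcut, sum_range_succ] at this
  obtain ⟨t, rfl⟩ : ∃ t, i = 2 * t + 1 := ⟨i / 2, by omega⟩
  have := hp.sum_range_mod_two t
  omega

lemma succ_eq_of_mod_two_eq_zero (hf : Antitone f) (hN : ∀ j, N ≤ j → f j = 0)
    (ho : IsOrthogonal f) (hp : IsParityPaired f) {i : ℕ} (hi : i % 2 = 1)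
    (heven : f i % 2 = 0) : f (i + 1) = f i := by
  have := hf (Nat.le_add_right i 1)
  by_contra hne
  have := mod_two_eq_one_of_lt_succ hf hN ho hp hi (by omega)
  omega

end Parity

section Waldspurger

variable {f g w : ℕ → ℕ} {d m₁ m₂ : ℕ}

lemma xiSeq_cases (f g : ℕ → ℕ) (hd : d % 2 = 1) (j : ℕ) :
    (xiSeq f g 1 1 d j = 1 ∧ j % 2 = 1 ∧ f j % 2 = 1 ∧ g j % 2 = 1 ∧
        f j + g j < f (j - 1) + g (j - 1)) ∨
      (xiSeq f g 1 1 d j = -1 ∧ j % 2 = 0 ∧ f j % 2 = 1 ∧ g j % 2 = 1 ∧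
        f (j + 1) + g (j + 1) < f j + g j) ∨
      (xiSeq f g 1 1 d j = 0 ∧
        ¬(j % 2 = 1 ∧ f j % 2 = 1 ∧ g j % 2 = 1 ∧ f j + g j < f (j - 1) + g (j - 1)) ∧
        ¬(j % 2 = 0 ∧ f j % 2 = 1 ∧ g j % 2 = 1 ∧ f (j + 1) + g (j + 1) < f j + g j)) := by
  unfold xiSeq
  split_ifs <;> omega

/-- The nonzero terms of `ξ` alternate `-1, +1, -1, …`, so its partial sums are `0` or `-1`. -/
lemma sum_range_succ_xiSeq (hf : Antitone f) (hg : Antitone g) (hpf : IsParityPaired f)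
    (hpg : IsParityPaired g) (hd : d % 2 = 1) (K : ℕ) :
    ∑ j ∈ range (K + 1), xiSeq f g 1 1 d j =
      if f K % 2 = 1 ∧ g K % 2 = 1 ∧ xiSeq f g 1 1 d K ≠ -1 then 0 else -1 := by
  induction K with
  | zero =>
    have := hpf.zero_odd
    have := hpg.zero_odd
    rw [sum_range_one]
    rcases xiSeq_cases f g hd 0 with h | h | h <;> split_ifs <;> omega
  | succ K ih =>
    rw [sum_range_succ, ih]
    have := hf (Nat.le_add_right K 1)
    have := hg (Nat.le_add_right K 1)
    have hfp : K % 2 = 1 → f (K + 1) % 2 = f K % 2 := hpf.succ_mod_two_of_odd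
    have hgp : K % 2 = 1 → g (K + 1) % 2 = g K % 2 := hpg.succ_mod_two_of_odd
    have hnext := xiSeq_cases f g hd (K + 1)
    simp only [Nat.add_sub_cancel] at hnext
    rcases xiSeq_cases f g hd K with h | h | h <;> rcases hnext with h' | h' | h' <;>
      split_ifs <;> omega

lemma wald_nonneg (f g : ℕ → ℕ) (hd : d % 2 = 1) (j : ℕ) : 0 ≤ wald f g 1 1 d j := by
  unfold wald
  rcases xiSeq_cases f g hd j with h | h | h <;> omega

lemma antitone_of_wald (hf : Antitone f) (hg : Antitone g) (hd : d % 2 = 1)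
    (hw : ∀ j, (w j : ℤ) = wald f g 1 1 d j) : Antitone w := by
  refine antitone_nat_of_succ_le fun j => ?_
  have h0 := hw j
  have h1 := hw (j + 1)
  have := hf (Nat.le_add_right j 1)
  have := hg (Nat.le_add_right j 1)
  have hnext := xiSeq_cases f g hd (j + 1)
  simp only [Nat.add_sub_cancel] at hnext
  unfold wald at h0 h1
  rcases xiSeq_cases f g hd j with h | h | h <;> rcases hnext with h' | h' | h' <;> omega

lemma sum_range_cast_of_wald (hw : ∀ j, (w j : ℤ) = wald f g 1 1 d j) (K : ℕ) :
    ((∑ j ∈ range K, w j : ℕ) : ℤ) =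
      (∑ j ∈ range K, f j : ℕ) + (∑ j ∈ range K, g j : ℕ) + ∑ j ∈ range K, xiSeq f g 1 1 d j := by
  push_cast
  rw [← sum_add_distrib, ← sum_add_distrib]
  exact sum_congr rfl fun j _ => hw j

lemma eq_zero_of_wald (hd : d % 2 = 1) (hw : ∀ j, (w j : ℤ) = wald f g 1 1 d j) {j : ℕ}
    (hfj : f j = 0) (hgj : g j = 0) : w j = 0 := by
  have hwj := hw j
  unfold wald at hwj
  rcases xiSeq_cases f g hd j with h | h | h <;> omega

lemma isPartitionOf_of_wald (hfp : IsPartitionOf f (m₁ + 1)) (hgp : IsPartitionOf g (m₂ + 1))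
    (hpf : IsParityPaired f) (hpg : IsParityPaired g) (hd : d % 2 = 1)
    (hw : ∀ j, (w j : ℤ) = wald f g 1 1 d j) : IsPartitionOf w (m₁ + m₂ + 1) := by
  obtain ⟨Nf, hNf, hsf⟩ := hfp.sum_range_eq
  obtain ⟨Ng, hNg, hsg⟩ := hgp.sum_range_eq
  set M := max Nf Ng
  have hzero : ∀ j, M ≤ j → f j = 0 ∧ g j = 0 := fun j hj =>
    ⟨hNf j (le_of_max_le_left hj), hNg j (le_of_max_le_right hj)⟩
  have hwN : ∀ j, M ≤ j → w j = 0 := fun j hj => eq_zero_of_wald hd hw (hzero j hj).1 (hzero j hj).2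
  refine ⟨antitone_of_wald hfp.1 hgp.1 hd hw, M, hwN, ?_⟩
  have hcast := sum_range_cast_of_wald hw (M + 1)
  rw [hsf _ (by omega), hsg _ (by omega), sum_range_succ_xiSeq hfp.1 hgp.1 hpf hpg hd,
    if_neg (by have := hzero M le_rfl; omega),
    sum_range_eq_of_le hwN (Nat.le_add_right M 1)] at hcast
  omega

end Waldspurger
section Orthogonal

variable {f g w : ℕ → ℕ} {d Nf Ng : ℕ}

lemma wald_eq_iff_of_even (hd : d % 2 = 1) (hw : ∀ j, (w j : ℤ) = wald f g 1 1 d j) {k : ℕ}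
    (hk : k % 2 = 0) (j : ℕ) : w j = k ↔ xiSeq f g 1 1 d j = 0 ∧ f j + g j = k := by
  have hwj := hw j
  unfold wald at hwj
  rcases xiSeq_cases f g hd j with h | h | h <;> omega

/-- A pair `2i, 2i+1` of positions where both parts are odd sees either no `ξ` at all or the
`-1, +1` around a drop; in the first case `W` is even and constant on the pair. -/
lemma wald_succ_eq_of_odd (hf : Antitone f) (hg : Antitone g) (hd : d % 2 = 1)
    (hw : ∀ j, (w j : ℤ) = wald f g 1 1 d j) {j : ℕ} (hj : j % 2 = 0)
    (h : (f j % 2 = 1 ∧ g j % 2 = 1 ∧ w j % 2 = 0) ∨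
      (f (j + 1) % 2 = 1 ∧ g (j + 1) % 2 = 1 ∧ w (j + 1) % 2 = 0)) :
    w (j + 1) = w j := by
  have h0 := hw j
  have h1 := hw (j + 1)
  have := hf (Nat.le_add_right j 1)
  have := hg (Nat.le_add_right j 1)
  have hnext := xiSeq_cases f g hd (j + 1)
  simp only [Nat.add_sub_cancel] at hnext
  unfold wald at h0 h1
  rcases xiSeq_cases f g hd j with h | h | h <;> rcases hnext with h' | h' | h' <;> omega

lemma wald_succ_eq_of_even (hf : Antitone f) (hg : Antitone g) (hNf : ∀ j, Nf ≤ j → f j = 0)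
    (hNg : ∀ j, Ng ≤ j → g j = 0) (hof : IsOrthogonal f) (hog : IsOrthogonal g)
    (hpf : IsParityPaired f) (hpg : IsParityPaired g) (hd : d % 2 = 1)
    (hw : ∀ j, (w j : ℤ) = wald f g 1 1 d j) {j : ℕ} (hj : j % 2 = 1)
    (hfj : f j % 2 = 0) (hgj : g j % 2 = 0) : w (j + 1) = w j := by
  have := succ_eq_of_mod_two_eq_zero hf hNf hof hpf hj hfj
  have := succ_eq_of_mod_two_eq_zero hg hNg hog hpg hj hgj
  have h0 := hw j
  have h1 := hw (j + 1)
  unfold wald at h0 h1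
  rcases xiSeq_cases f g hd j with h | h | h <;>
    rcases xiSeq_cases f g hd (j + 1) with h' | h' | h' <;> omega

lemma finite_setOf_wald_eq (hd : d % 2 = 1) (hw : ∀ j, (w j : ℤ) = wald f g 1 1 d j)
    (hNf : ∀ j, Nf ≤ j → f j = 0) (hNg : ∀ j, Ng ≤ j → g j = 0) {k : ℕ} (hk : 0 < k) :
    {j | w j = k}.Finite :=
  (Set.finite_Iio (max Nf Ng)).subset fun j (hj : w j = k) => by
    by_contra hlt
    have hle : max Nf Ng ≤ j := not_lt.1 hlt
    have := eq_zero_of_wald hd hw (hNf j (le_of_max_le_left hle)) (hNg j (le_of_max_le_right hle))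
    omega

lemma eq_and_eq_of_wald_eq (hf : Antitone f) (hg : Antitone g) (hd : d % 2 = 1)
    (hw : ∀ j, (w j : ℤ) = wald f g 1 1 d j) {k i j : ℕ} (hk : k % 2 = 0) (hi : w i = k)
    (hj : w j = k) : f i = f j ∧ g i = g j := by
  have := (wald_eq_iff_of_even hd hw hk i).1 hi
  have := (wald_eq_iff_of_even hd hw hk j).1 hj
  rcases le_total i j with h | h <;>
  · have := hf h
    have := hg h
    omega

lemma isOrthogonal_of_wald (hf : Antitone f) (hg : Antitone g) (hNf : ∀ j, Nf ≤ j → f j = 0)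
    (hNg : ∀ j, Ng ≤ j → g j = 0) (hof : IsOrthogonal f) (hog : IsOrthogonal g)
    (hpf : IsParityPaired f) (hpg : IsParityPaired g) (hd : d % 2 = 1)
    (hw : ∀ j, (w j : ℤ) = wald f g 1 1 d j) : IsOrthogonal w := by
  intro k hk hke
  rw [Nat.even_iff] at hke
  rw [pmult_eq_ncard]
  rcases Set.eq_empty_or_nonempty {j | w j = k} with hS | ⟨j0, hj0 : w j0 = k⟩
  · simp [hS]
  have hfin := finite_setOf_wald_eq hd hw hNf hNg hk
  have hblock : ∀ j, w j = k → f j = f j0 ∧ g j = g j0 :=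
    fun j hj => eq_and_eq_of_wald_eq hf hg hd hw hke hj hj0
  have hxy := ((wald_eq_iff_of_even hd hw hke j0).1 hj0).2
  rcases Nat.mod_two_eq_zero_or_one (f j0) with hx | hx
  · refine even_ncard_of_forall_mem_iff_succ hfin (fun (h0 : w 0 = k) => ?_)
      fun i => ⟨fun (hi : w (2 * i + 1) = k) => ?_, fun (hi : w (2 * i + 2) = k) => ?_⟩
    · have := (hblock 0 h0).1
      have := hpf.zero_odd
      omega
    · have := hblock _ hi
      show w (2 * i + 1 + 1) = k
      rwa [wald_succ_eq_of_even hf hg hNf hNg hof hog hpf hpg hd hw (by omega) (by omega)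
        (by omega)]
    · have := hblock _ hi
      have := hpf.succ_mod_two i
      have := hpg.succ_mod_two i
      show w (2 * i + 1) = k
      rwa [← wald_succ_eq_of_even hf hg hNf hNg hof hog hpf hpg hd hw (by omega) (by omega)
        (by omega)]
  · refine even_ncard_of_forall_mem_iff hfin
      fun i => ⟨fun (hi : w (2 * i) = k) => ?_, fun (hi : w (2 * i + 1) = k) => ?_⟩
    · have := hblock _ hi
      show w (2 * i + 1) = k
      rwa [wald_succ_eq_of_odd hf hg hd hw (by omega) (Or.inl ⟨by omega, by omega, by omega⟩)]
    · have := hblock _ hi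
      show w (2 * i) = k
      rwa [← wald_succ_eq_of_odd hf hg hd hw (by omega) (Or.inr ⟨by omega, by omega, by omega⟩)]

end Orthogonal

section ColumnBound

/-- The properties of the columns `c = νᵗ` of a symplectic partition `ν ≤ (fᵗ)⁻` that the
comparison with `W` uses. -/
def IsColumnBound (f c : ℕ → ℕ) : Prop :=
  Antitone c ∧ (∀ r, Even (∑ k ∈ range (2 * r), c k)) ∧
    ∀ K, ∑ j ∈ range K, f j ≤ ∑ k ∈ range K, c k + if f K < f 0 then 1 else 0

variable {f c ν : ℕ → ℕ} {m : ℕ}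

lemma even_sum_range_ptrans_of_isSymplectic (hν : IsPartitionOf ν m) (hs : IsSymplectic ν)
    (r : ℕ) : Even (∑ k ∈ range (2 * r), ptrans ν k) := by
  obtain ⟨N, hN, -⟩ := hν.sum_range_eq
  refine even_sum_range_two_mul (fun i => ?_) r
  have hmult := pmult_succ hν.1 hN (2 * i)
  have hodd := Nat.even_iff.1 (hs (2 * i + 1) (by omega) ⟨i, by ring⟩)
  have := ptrans_antitone hν.1 hN (Nat.le_add_right (2 * i) 1)
  rw [Nat.even_iff]
  omega

lemma isColumnBound_ptrans (hf : IsPartitionOf f (m + 1)) (hν : IsPartitionOf ν m)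
    (hs : IsSymplectic ν) (hle : NDomLE ν (minusOne (ptrans f))) : IsColumnBound f (ptrans ν) := by
  obtain ⟨N, hN, -⟩ := hν.sum_range_eq
  refine ⟨ptrans_antitone hν.1 hN, even_sum_range_ptrans_of_isSymplectic hν hs, fun K => ?_⟩
  have := hle.transpose hν hf.minusOne_ptrans K
  rw [← sum_range_ptrans_minusOne_ptrans hf K]
  omega

lemma IsColumnBound.le_of_even (hc : IsColumnBound f c) {r : ℕ}
    (h : (∑ j ∈ range (2 * r), f j) % 2 = 0) :
    ∑ j ∈ range (2 * r), f j ≤ ∑ k ∈ range (2 * r), c k := by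
  have hbound := hc.2.2 (2 * r)
  have := Nat.even_iff.1 (hc.2.1 r)
  split_ifs at hbound <;> omega

/-- At even cuts parity makes the column bound exact; for an odd cut `2t + 1` with a repeated
part, `F (2t+1)` is the average of `F (2t)` and `F (2t+2)`, and `∑ c` is concave. -/
lemma IsColumnBound.sum_range_succ_le (hc : IsColumnBound f c) (hp : IsParityPaired f) {K : ℕ}
    (hK : f K % 2 = 1) (hconst : K % 2 = 0 → f (K + 1) = f K) :
    ∑ j ∈ range (K + 1), f j ≤ ∑ k ∈ range (K + 1), c k := by
  obtain ⟨t, rfl | rfl⟩ : ∃ t, K = 2 * t ∨ K = 2 * t + 1 := ⟨K / 2, by omega⟩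
  · have := hp.sum_range_mod_two t
    have := sum_range_succ f (2 * t)
    have := sum_range_succ f (2 * t + 1)
    have := sum_range_succ c (2 * t)
    have := sum_range_succ c (2 * t + 1)
    have := hconst (by omega)
    have := hc.1 (Nat.le_add_right (2 * t) 1)
    have hlo := hc.le_of_even (r := t) (by omega)
    have hhi := hc.le_of_even (r := t + 1) (by rw [show 2 * (t + 1) = 2 * t + 1 + 1 by ring]; omega)
    rw [show 2 * (t + 1) = 2 * t + 1 + 1 by ring] at hhi
    omega
  · have hodd := hp.sum_range_mod_two t
    have := hc.le_of_even (r := t + 1) (by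
      rw [show 2 * (t + 1) = 2 * t + 1 + 1 by ring, sum_range_succ]
      omega)
    rwa [show 2 * (t + 1) = 2 * t + 1 + 1 by ring] at this

end ColumnBound

section Comparison

variable {f g w u c₁ c₂ : ℕ → ℕ} {d m : ℕ}

lemma lt_zero_of_wald (hpf : IsParityPaired f) (hpg : IsParityPaired g) (hd : d % 2 = 1)
    (hw : ∀ j, (w j : ℤ) = wald f g 1 1 d j) {K : ℕ} (hfK : f K < f 0) (hgK : g K < g 0) :
    w K < w 0 := by
  have h0 := hw 0
  have hK := hw K
  have := hpf.zero_odd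
  have := hpg.zero_odd
  unfold wald at h0 hK
  rcases xiSeq_cases f g hd 0 with h | h | h <;>
    rcases xiSeq_cases f g hd K with h' | h' | h' <;> omega

/-- Where the partial sum of `ξ` is `0`, the parts of both `λᵢ` at the cut are odd and the
column bounds are exact; where it is `-1`, an extra box has to be absorbed only when both `λᵢ`
have dropped below their largest part, and then so has `W`. -/
lemma sum_range_le_of_wald (hf : Antitone f) (hg : Antitone g) (hpf : IsParityPaired f)
    (hpg : IsParityPaired g) (hd : d % 2 = 1) (hw : ∀ j, (w j : ℤ) = wald f g 1 1 d j)
    (hc₁ : IsColumnBound f c₁) (hc₂ : IsColumnBound g c₂) (K : ℕ) :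
    ∑ j ∈ range K, w j ≤
      ∑ k ∈ range K, c₁ k + ∑ k ∈ range K, c₂ k + if w K < w 0 then 1 else 0 := by
  rcases K with _ | K
  · simp
  have hcast := sum_range_cast_of_wald hw (K + 1)
  rw [sum_range_succ_xiSeq hf hg hpf hpg hd K] at hcast
  split_ifs at hcast with hstate
  · obtain ⟨hfK, hgK, hxi⟩ := hstate
    have hconst : K % 2 = 0 → f (K + 1) = f K ∧ g (K + 1) = g K := fun hK => by
      have := hf (Nat.le_add_right K 1)
      have := hg (Nat.le_add_right K 1)
      rcases xiSeq_cases f g hd K with h | h | h <;> omega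
    have := hc₁.sum_range_succ_le hpf hfK fun hK => (hconst hK).1
    have := hc₂.sum_range_succ_le hpg hgK fun hK => (hconst hK).2
    split_ifs <;> omega
  · have := hc₁.2.2 (K + 1)
    have := hc₂.2.2 (K + 1)
    have hlt : f (K + 1) < f 0 → g (K + 1) < g 0 → w (K + 1) < w 0 :=
      lt_zero_of_wald hpf hpg hd hw
    split_ifs at * <;> omega

lemma nDomLE_minusOne_ptrans (hwp : IsPartitionOf w (m + 1)) (hup : IsPartitionOf u m)
    (h : ∀ K, ∑ j ∈ range K, w j ≤ ∑ k ∈ range K, ptrans u k + if w K < w 0 then 1 else 0) :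
    NDomLE u (minusOne (ptrans w)) :=
  NDomLE.of_transpose hup hwp.minusOne_ptrans fun K => by
    have := sum_range_ptrans_minusOne_ptrans hwp K
    have := h K
    omega

lemma nDomLE_plusOne_ptrans
    (h : ∀ K, ∑ j ∈ range K, w j ≤ ∑ k ∈ range K, ptrans u k + if w K < w 0 then 1 else 0) :
    NDomLE w (plusOne (ptrans u)) := by
  rintro (_ | K)
  · simp
  rw [sum_range_succ_plusOne]
  have := h (K + 1)
  split_ifs at this <;> omega

end Comparison

/-- type B.  `d₁ = 2n₁+1`, `d₂ = 2n₂+1`, `d = d₁+d₂−1 = 2n₁+2n₂+1`,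
`λ₁, λ₂` special orthogonal partitions of `d₁, d₂`, `W = W(λ₁,λ₂)` with `ε₁ = ε₂ = 1`.
(i) `W` is an orthogonal partition of `d`;
(ii) if `ν₁, ν₂, ν` are C-collapses of `(λ₁ᵗ)⁻`, `(λ₂ᵗ)⁻`, `(Wᵗ)⁻` then `ν₁ ∪ ν₂ ≤ ν`;
(iii) if moreover `η` is a B-collapse of `((ν₁ ∪ ν₂)ᵗ)⁺` then `W ≤ η`. -/
theorem stmt0 (n1 n2 : ℕ) (lam1 lam2 : ℕ → ℕ)
    (h1 : IsPartitionOf lam1 (2*n1+1)) (h1o : IsOrthogonal lam1)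
    (h1s : IsOrthogonal (ptrans lam1))
    (h2 : IsPartitionOf lam2 (2*n2+1)) (h2o : IsOrthogonal lam2)
    (h2s : IsOrthogonal (ptrans lam2)) :
    (∃ w : ℕ → ℕ, (∀ j, (w j : ℤ) = wald lam1 lam2 1 1 (2*n1+2*n2+1) j) ∧
        IsPartitionOf w (2*n1+2*n2+1) ∧ IsOrthogonal w) ∧
    (∀ w : ℕ → ℕ, (∀ j, (w j : ℤ) = wald lam1 lam2 1 1 (2*n1+2*n2+1) j) →
      ∀ ν1 ν2 ν : ℕ → ℕ,
        IsCCollapse (2*n1) (minusOne (ptrans lam1)) ν1 →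
        IsCCollapse (2*n2) (minusOne (ptrans lam2)) ν2 →
        IsCCollapse (2*n1+2*n2) (minusOne (ptrans w)) ν →
        ∀ u : ℕ → ℕ, IsUnionOf u ν1 ν2 →
          NDomLE u ν ∧
          ∀ η : ℕ → ℕ, IsBCollapse (2*n1+2*n2+1) (plusOne (ptrans u)) η →
            NDomLE w η) := by
  have hp1 := isParityPaired_of_special h1 h1s
  have hp2 := isParityPaired_of_special h2 h2s
  have hd : (2 * n1 + 2 * n2 + 1) % 2 = 1 := by omega
  obtain ⟨N1, hN1, -⟩ := h1.sum_range_eq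
  obtain ⟨N2, hN2, -⟩ := h2.sum_range_eq
  have hW : ∀ w : ℕ → ℕ, (∀ j, (w j : ℤ) = wald lam1 lam2 1 1 (2*n1+2*n2+1) j) →
      IsPartitionOf w (2*n1+2*n2+1) ∧ IsOrthogonal w := fun w hw =>
    ⟨isPartitionOf_of_wald h1 h2 hp1 hp2 hd hw,
      isOrthogonal_of_wald h1.1 h2.1 hN1 hN2 h1o h2o hp1 hp2 hd hw⟩
  have hcast : ∀ j, ((wald lam1 lam2 1 1 _ j).toNat : ℤ) = wald lam1 lam2 1 1 _ j :=
    fun j => Int.toNat_of_nonneg (wald_nonneg _ _ hd j)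
  refine ⟨⟨_, hcast, hW _ hcast⟩, fun w hw ν1 ν2 ν hc1 hc2 hc u hu => ?_⟩
  obtain ⟨hwp, hwo⟩ := hW w hw
  have hup := hu.isPartitionOf hc1.1 hc2.1
  have hbound : ∀ K, ∑ j ∈ range K, w j ≤
      ∑ k ∈ range K, ptrans u k + if w K < w 0 then 1 else 0 := fun K => by
    rw [sum_congr rfl fun k _ => hu.ptrans_eq hc1.1 hc2.1 k, sum_add_distrib]
    exact sum_range_le_of_wald h1.1 h2.1 hp1 hp2 hd hw
      (isColumnBound_ptrans h1 hc1.1 hc1.2.1 hc1.2.2.1)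
      (isColumnBound_ptrans h2 hc2.1 hc2.2.1 hc2.2.2.1) K
  exact ⟨hc.2.2.2 u hup (hu.isSymplectic hc1.2.1 hc2.2.1) (nDomLE_minusOne_ptrans hwp hup hbound),
    fun η hη => hη.2.2.2 w hwp hwo (nDomLE_plusOne_ptrans hbound)⟩
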